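/- Let R ⊆ (𝕋ⁿ)². The following are equivalent: (1) R is a signed bend cone and R is closed in (𝕋ⁿ)²; (2) there exists a closed monotone pre-congruence C ⊆ (𝕋ⁿ)² such that R is the signed part of C, i.e., R = {(x⁺,x⁻) ∈ C : (x⁺,x⁻) is signed}. -/

import Mathlib

/-- The tropical (max-plus) semiring 𝕋 = ℝ ∪ {−∞}, modeled as `WithBot ℝ`. -/
abbrev Trop : Type := WithBot ℝ

/-- The map 𝕋 → ℝ, x ↦ eˣ (with e^{−∞} = 0), inducing the metric
d(x,y) = |eˣ − e^y| on 𝕋. -/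
noncomputable def tropExp : Trop → ℝ := WithBot.recBotCoe (0 : ℝ) Real.exp

/-- The topology on 𝕋 induced by the metric d(x,y) = |eˣ − e^y|. -/
noncomputable instance : TopologicalSpace Trop :=
  TopologicalSpace.induced tropExp inferInstance

/-- A pair of vectors (x⁺, x⁻) ∈ (𝕋ⁿ)² is signed if, for every coordinate i,
x⁺_i = −∞ or x⁻_i = −∞. -/
def SignedVecPair {n : ℕ} (x : (Fin n → Trop) × (Fin n → Trop)) : Prop :=
  ∀ i, x.1 i = ⊥ ∨ x.2 i = ⊥

/-- Tropical scalar product of vectors: ⟨x,y⟩ = max_i (x_i + y_i). -/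
noncomputable def tdot {n : ℕ} (x y : Fin n → Trop) : Trop :=
  Finset.univ.sup fun i => x i + y i

/-- The "signed part" f^∨ of a pair of vectors f = (f⁺, f⁻):
f^{∨+}_i = f⁺_i if f⁺_i ≥ f⁻_i and −∞ otherwise;
f^{∨−}_i = f⁻_i if f⁻_i > f⁺_i and −∞ otherwise. -/
noncomputable def vee {n : ℕ} (f : (Fin n → Trop) × (Fin n → Trop)) :
    (Fin n → Trop) × (Fin n → Trop) :=
  (fun i => if f.2 i ≤ f.1 i then f.1 i else ⊥,
   fun i => if f.1 i < f.2 i then f.2 i else ⊥)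

/-- Tropical scalar action: (λ ⊙ f)_i = λ + f_i. -/
noncomputable def tsmul {n : ℕ} (l : Trop) (f : Fin n → Trop) : Fin n → Trop :=
  fun i => l + f i

/-- A monotone pre-congruence C ⊆ (𝕋ⁿ)²: stable by tropical scalar multiplication,
by componentwise max, by "transitivity" (f⁻ = g⁺ implies (f⁺,g⁻) ∈ C), and containing
every pair (f⁺,f⁻) with f⁺ ≥ f⁻. -/
structure IsMonotonePrecongruence {n : ℕ} (C : Set ((Fin n → Trop) × (Fin n → Trop))) : Prop where
  smul_mem : ∀ f ∈ C, ∀ l : Trop, (tsmul l f.1, tsmul l f.2) ∈ C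
  add_mem : ∀ f ∈ C, ∀ g ∈ C, (f.1 ⊔ g.1, f.2 ⊔ g.2) ∈ C
  trans_mem : ∀ f ∈ C, ∀ g ∈ C, f.2 = g.1 → (f.1, g.2) ∈ C
  monotone_mem : ∀ f : (Fin n → Trop) × (Fin n → Trop), f.2 ≤ f.1 → f ∈ C

/-- The pair x ⊕_i y = (x⁺ ⊕ y⁺_{∖i}, x⁻_{∖i} ⊕ y⁻), where z_{∖i} is z with
coordinate i replaced by −∞. -/
noncomputable def oplusI {n : ℕ} (i : Fin n)
    (x y : (Fin n → Trop) × (Fin n → Trop)) : (Fin n → Trop) × (Fin n → Trop) :=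
  (x.1 ⊔ Function.update y.1 i ⊥, Function.update x.2 i ⊥ ⊔ y.2)

/-- A signed bend cone R ⊆ (𝕋ⁿ)²: all elements are signed pairs, R contains all
pairs (x⁺, −∞), is stable by tropical scalar multiplication, and is stable under
the operations x, y ↦ (x ⊕ y)^∨ and x, y ↦ (x ⊕_i y)^∨ (the latter when x⁻_i = y⁺_i). -/
structure IsSignedBendCone {n : ℕ} (R : Set ((Fin n → Trop) × (Fin n → Trop))) : Prop where
  signed : ∀ x ∈ R, SignedVecPair x
  pos_mem : ∀ xp : Fin n → Trop, (xp, fun _ => (⊥ : Trop)) ∈ R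
  smul_mem : ∀ x ∈ R, ∀ l : Trop, (tsmul l x.1, tsmul l x.2) ∈ R
  add_vee_mem : ∀ x ∈ R, ∀ y ∈ R, vee (x.1 ⊔ y.1, x.2 ⊔ y.2) ∈ R
  addI_vee_mem : ∀ x ∈ R, ∀ y ∈ R, ∀ i : Fin n, x.2 i = y.1 i → vee (oplusI i x y) ∈ R

/-- The one-sided polar B^⊲ = {a ∈ 𝕋ⁿ : ⟨x⁺,a⟩ ≥ ⟨x⁻,a⟩ for all (x⁺,x⁻) ∈ B}. -/
def onePolar {n : ℕ} (B : Set ((Fin n → Trop) × (Fin n → Trop))) : Set (Fin n → Trop) :=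
  {a | ∀ x ∈ B, tdot x.2 a ≤ tdot x.1 a}

/-- The signed part C^∨ of a set C ⊆ (𝕋ⁿ)²: the signed pairs belonging to C. -/
def signedPart {n : ℕ} (C : Set ((Fin n → Trop) × (Fin n → Trop))) :
    Set ((Fin n → Trop) × (Fin n → Trop)) :=
  {x ∈ C | SignedVecPair x}

/-- The signed polar A° of A ⊆ 𝕋ⁿ : the set of signed pairs (x⁺,x⁻) with
⟨x⁺,a⟩ ≥ ⟨x⁻,a⟩ for all a ∈ A. -/
def signedPolar {n : ℕ} (A : Set (Fin n → Trop)) :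
    Set ((Fin n → Trop) × (Fin n → Trop)) :=
  {x | SignedVecPair x ∧ ∀ a ∈ A, tdot x.2 a ≤ tdot x.1 a}

/-!
If `C` is a closed monotone pre-congruence, then `C` is stable under `f ↦ f^∨`; with its
direct stability under the two sums this makes its signed part a signed bend cone. Indeed
`(f⁺, f^{∨-}) ∈ C` and `f⁺ = f^{∨+} ⊔ j`, where `j` lies strictly below `f^{∨-}` wherever it
is finite, say `j ≤ l ⊙ f^{∨-}` with `l < 0`. The pre-congruence rules turn
`(f^{∨+} ⊔ j, f^{∨-}) ∈ C` into `(f^{∨+} ⊔ (k l) ⊙ j, f^{∨-}) ∈ C` for every `k`, and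
closedness lets `k → ∞`.

Conversely, a closed signed bend cone `R` is the signed part of `C = {f | f^∨ ∈ R}`. The cone
`R` is upward closed for the order raising positive and lowering negative parts (negative
coordinates are lowered one at a time, by a bend with `(δₖ, −∞)` and a rescaled copy). For
transitivity, `(p ⊔ m, m ⊔ q)^∨ ∈ R`, and the only coordinates where it is too large are those
where `m` stays positive although `p < m`; there a bend with `(p, m)^∨` cancels `m`. Finally `C`
is closed because on each set of pairs with a fixed sign pattern `f^∨` is continuous up to
ties, and ties are repaired by the same monotonicity.
-/

open Filter Topology Function

@[simp] lemma tropExp_bot : tropExp ⊥ = 0 := rfl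

@[simp] lemma tropExp_coe (x : ℝ) : tropExp x = Real.exp x := rfl

lemma tropExp_strictMono : StrictMono tropExp := by
  intro a b hab
  cases b using WithBot.recBotCoe with
  | bot => exact absurd hab not_lt_bot
  | coe y =>
    cases a using WithBot.recBotCoe with
    | bot => simpa using Real.exp_pos y
    | coe x => simpa using WithBot.coe_lt_coe.1 hab

lemma isInducing_tropExp : IsInducing tropExp := ⟨rfl⟩

lemma tropExp_add (a b : Trop) : tropExp (a + b) = tropExp a * tropExp b := by
  cases a using WithBot.recBotCoe <;> cases b using WithBot.recBotCoe <;>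
    simp [← WithBot.coe_add, Real.exp_add]

instance : ContinuousAdd Trop where
  continuous_add := by
    refine isInducing_tropExp.continuous_iff.2 ?_
    simp only [Function.comp_def, tropExp_add]
    exact (isInducing_tropExp.continuous.comp continuous_fst).mul
      (isInducing_tropExp.continuous.comp continuous_snd)

instance : OrderClosedTopology Trop where
  isClosed_le' := by
    have h := (isClosed_le continuous_fst continuous_snd).preimage
      ((isInducing_tropExp.continuous.comp continuous_fst).prodMk
        (isInducing_tropExp.continuous.comp continuous_snd))
    simpa [Set.preimage, tropExp_strictMono.le_iff_le] using h

lemma tendsto_coe_atBot_nhds_bot : Tendsto ((↑) : ℝ → Trop) atBot (𝓝 ⊥) := by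
  rw [isInducing_tropExp.tendsto_nhds_iff]
  exact Real.tendsto_exp_atBot

lemma exists_nonpos_add_eq {a b : Trop} (h : a ≤ b) : ∃ l ≤ (0 : Trop), l + b = a := by
  cases a using WithBot.recBotCoe with
  | bot => exact ⟨⊥, bot_le, WithBot.bot_add b⟩
  | coe x =>
    cases b using WithBot.recBotCoe with
    | bot => exact absurd h (WithBot.not_coe_le_bot x)
    | coe y =>
      refine ⟨((x - y : ℝ) : Trop), ?_, ?_⟩
      · exact WithBot.coe_le_coe.2 (by linarith [WithBot.coe_le_coe.1 h])
      · rw [← WithBot.coe_add, sub_add_cancel]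

lemma mem_of_update_mem {ι α : Type*} [Fintype ι] [DecidableEq ι] {S : Set (ι → α)}
    {a b : ι → α} (ha : a ∈ S) (h : ∀ v ∈ S, ∀ k, v k = a k → update v k (b k) ∈ S) :
    b ∈ S := by
  have key : ∀ T : Finset ι, T.piecewise b a ∈ S := by
    intro T
    induction T using Finset.induction_on with
    | empty => simpa using ha
    | insert k T hk ih =>
      rw [Finset.piecewise_insert]
      exact h _ ih k (T.piecewise_eq_of_notMem _ _ hk)
  simpa using key Finset.univ

section Pairs

variable {n : ℕ}

lemma tsmul_sup (l : Trop) (f g : Fin n → Trop) : tsmul l (f ⊔ g) = tsmul l f ⊔ tsmul l g :=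
  funext fun i => (max_add_add_left l (f i) (g i)).symm

lemma tsmul_le_self {l : Trop} (hl : l ≤ 0) (f : Fin n → Trop) : tsmul l f ≤ f :=
  fun _ => add_le_of_nonpos_left hl

lemma tsmul_tsmul (l l' : Trop) (f : Fin n → Trop) : tsmul l (tsmul l' f) = tsmul (l + l') f :=
  funext fun i => (add_assoc l l' (f i)).symm

@[simp] lemma tsmul_zero (f : Fin n → Trop) : tsmul 0 f = f :=
  funext fun i => zero_add (f i)

@[simp] lemma tsmul_bot (f : Fin n → Trop) : tsmul ⊥ f = ⊥ :=
  funext fun i => WithBot.bot_add (f i)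

lemma exists_neg_le_tsmul {a b : Fin n → Trop} (h : ∀ i, a i = ⊥ ∨ a i < b i) :
    ∃ l : ℝ, l < 0 ∧ a ≤ tsmul l b := by
  have hev : ∀ i, ∀ᶠ l : ℝ in 𝓝 0, a i ≤ l + b i := by
    intro i
    cases ha : a i using WithBot.recBotCoe with
    | bot => simp
    | coe α =>
      have hb := (h i).resolve_left (by simp [ha])
      rw [ha] at hb
      lift b i to ℝ using hb.ne_bot with β
      filter_upwards [eventually_gt_nhds (sub_neg.2 (WithBot.coe_lt_coe.1 hb))] with l hl
      exact WithBot.coe_le_coe.2 (by linarith)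
  obtain ⟨l, hl, hle⟩ :=
    ((eventually_all.2 hev).filter_mono nhdsWithin_le_nhds |>.and self_mem_nhdsWithin).exists
      (f := 𝓝[<] (0 : ℝ))
  exact ⟨l, hle, hl⟩

@[simp] lemma vee_fst_apply (f : (Fin n → Trop) × (Fin n → Trop)) (i : Fin n) :
    (vee f).1 i = if f.2 i ≤ f.1 i then f.1 i else ⊥ := rfl

@[simp] lemma vee_snd_apply (f : (Fin n → Trop) × (Fin n → Trop)) (i : Fin n) :
    (vee f).2 i = if f.1 i < f.2 i then f.2 i else ⊥ := rfl

lemma SignedVecPair.of_snd_le {x : (Fin n → Trop) × (Fin n → Trop)} (hx : SignedVecPair x)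
    {c : Fin n → Trop} (hc : c ≤ x.2) : SignedVecPair (x.1, c) := fun i =>
  (hx i).imp id fun h => le_bot_iff.1 ((hc i).trans_eq h)

lemma SignedVecPair.tsmul {x : (Fin n → Trop) × (Fin n → Trop)} (hx : SignedVecPair x)
    (l : Trop) : SignedVecPair (tsmul l x.1, tsmul l x.2) := fun i =>
  (hx i).imp (fun h => by simp [_root_.tsmul, h]) (fun h => by simp [_root_.tsmul, h])

lemma isClosed_setOf_signedVecPair :
    IsClosed {x : (Fin n → Trop) × (Fin n → Trop) | SignedVecPair x} := by
  simp only [SignedVecPair, Set.ofPred_forall, Set.ofPred_or]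
  exact isClosed_iInter fun i =>
    (isClosed_eq (by fun_prop) continuous_const).union (isClosed_eq (by fun_prop) continuous_const)

lemma vee_signed (f : (Fin n → Trop) × (Fin n → Trop)) : SignedVecPair (vee f) := by
  intro i
  by_cases h : f.2 i ≤ f.1 i
  · simp [not_lt.2 h]
  · simp [h]

lemma vee_eq_self {x : (Fin n → Trop) × (Fin n → Trop)} (hx : SignedVecPair x) : vee x = x := by
  ext i <;> rcases hx i with h | h <;> simp [h, bot_lt_iff_ne_bot, eq_comm]

lemma vee_of_le {f : (Fin n → Trop) × (Fin n → Trop)} (h : f.2 ≤ f.1) : vee f = (f.1, ⊥) := by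
  ext i <;> simp [h i]

lemma vee_snd_le (f : (Fin n → Trop) × (Fin n → Trop)) : (vee f).2 ≤ f.2 := by
  intro i; simp only [vee_snd_apply]; split_ifs <;> simp

lemma vee_sup_vee (f g : (Fin n → Trop) × (Fin n → Trop)) :
    vee (vee f ⊔ vee g) = vee (f ⊔ g) := by
  ext i <;> simp only [vee, Prod.fst_sup, Prod.snd_sup, Pi.sup_apply] <;> split_ifs <;> grind

lemma vee_tsmul (l : Trop) (f : (Fin n → Trop) × (Fin n → Trop)) :
    vee (tsmul l f.1, tsmul l f.2) = (tsmul l (vee f).1, tsmul l (vee f).2) := by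
  rcases eq_or_ne l ⊥ with rfl | hl
  · simp [vee_of_le]
  · ext i <;> simp [tsmul, WithBot.add_le_add_iff_left hl, WithBot.add_lt_add_iff_left hl,
      apply_ite (l + ·)]

lemma vee_erase (f : (Fin n → Trop) × (Fin n → Trop)) (k : Fin n) :
    vee (update f.1 k ⊥, update f.2 k ⊥) = (update (vee f).1 k ⊥, update (vee f).2 k ⊥) := by
  ext i <;> rcases eq_or_ne i k with rfl | hi <;> simp [*]

lemma vee_le_vee {f g : (Fin n → Trop) × (Fin n → Trop)} (h₂ : g.2 ≤ f.2)
    (h₁ : ∀ k, f.1 k ≤ g.1 k ∨ f.1 k < g.2 k) :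
    (vee f).1 ≤ (vee g).1 ∧ (vee g).2 ≤ (vee f).2 := by
  constructor <;> intro k <;> have := h₂ k <;> rcases h₁ k with h | h <;>
    simp only [vee_fst_apply, vee_snd_apply] <;> split_ifs <;> first | exact bot_le | grind

def signRestrict (s : Finset (Fin n)) (f : (Fin n → Trop) × (Fin n → Trop)) :
    (Fin n → Trop) × (Fin n → Trop) :=
  (s.piecewise f.1 ⊥, s.piecewise ⊥ f.2)

lemma continuous_signRestrict (s : Finset (Fin n)) : Continuous (signRestrict s) := by
  refine (continuous_pi fun i => ?_).prodMk (continuous_pi fun i => ?_) <;>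
    by_cases hi : i ∈ s <;> simp [hi] <;> fun_prop

lemma signRestrict_filter_eq_vee (f : (Fin n → Trop) × (Fin n → Trop)) :
    signRestrict (Finset.univ.filter fun i => f.2 i ≤ f.1 i) f = vee f := by
  ext i <;> by_cases h : f.2 i ≤ f.1 i <;> simp [signRestrict, h, not_lt.2]

namespace IsMonotonePrecongruence

variable {C : Set ((Fin n → Trop) × (Fin n → Trop))}

lemma mem_of_le_left (hC : IsMonotonePrecongruence C) {f g h : Fin n → Trop} (hfg : (f, g) ∈ C)
    (hle : f ≤ h) : (h, g) ∈ C :=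
  hC.trans_mem (h, f) (hC.monotone_mem _ hle) _ hfg rfl

lemma mem_of_le_right (hC : IsMonotonePrecongruence C) {f g h : Fin n → Trop} (hfg : (f, g) ∈ C)
    (hle : h ≤ g) : (f, h) ∈ C :=
  hC.trans_mem _ hfg (g, h) (hC.monotone_mem _ hle) rfl

lemma sup_mem_sup (hC : IsMonotonePrecongruence C) {f g : Fin n → Trop} (hfg : (f, g) ∈ C)
    (h : Fin n → Trop) : (h ⊔ f, h ⊔ g) ∈ C :=
  hC.add_mem (h, h) (hC.monotone_mem _ le_rfl) _ hfg

lemma sup_tsmul_mem (hC : IsMonotonePrecongruence C) {u j w : Fin n → Trop} {l : Trop}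
    (hl : l ≤ 0) (hj : j ≤ tsmul l w) (h : (u ⊔ j, w) ∈ C) : (u ⊔ tsmul l j, w) ∈ C := by
  have hshift : (tsmul l (u ⊔ j), j) ∈ C := hC.mem_of_le_right (hC.smul_mem _ h l) hj
  have hstep : (u ⊔ tsmul l j, u ⊔ j) ∈ C := by
    have := hC.sup_mem_sup hshift u
    rwa [tsmul_sup, ← sup_assoc, sup_eq_left.2 (tsmul_le_self hl u)] at this
  exact hC.trans_mem _ hstep _ h rfl

lemma sup_tsmul_mul_mem (hC : IsMonotonePrecongruence C) {u j w : Fin n → Trop} {l : ℝ}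
    (hl : l ≤ 0) (hj : j ≤ tsmul l w) (h : (u ⊔ j, w) ∈ C) (k : ℕ) :
    (u ⊔ tsmul ((k * l : ℝ) : Trop) j, w) ∈ C := by
  induction k with
  | zero => simpa using h
  | succ k ih =>
    have hkl : ((k * l : ℝ) : Trop) ≤ 0 :=
      WithBot.coe_le_coe.2 (mul_nonpos_of_nonneg_of_nonpos k.cast_nonneg hl)
    have := hC.sup_tsmul_mem (WithBot.coe_le_coe.2 hl) ((tsmul_le_self hkl j).trans hj) ih
    rwa [tsmul_tsmul, ← WithBot.coe_add, show l + k * l = ((k + 1 : ℕ) : ℝ) * l by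
      push_cast; ring] at this

lemma mem_of_sup_mem (hC : IsMonotonePrecongruence C) (hCc : IsClosed C)
    {u j w : Fin n → Trop} {l : ℝ} (hl : l < 0) (hj : j ≤ tsmul l w) (h : (u ⊔ j, w) ∈ C) :
    (u, w) ∈ C := by
  have hlim : Tendsto (fun k : ℕ => ((k * l : ℝ) : Trop)) atTop (𝓝 ⊥) :=
    tendsto_coe_atBot_nhds_bot.comp (tendsto_natCast_atTop_atTop.atTop_mul_const_of_neg hl)
  have hcont : Continuous fun c : Trop => (u ⊔ tsmul c j, w) :=
    (continuous_pi fun i => continuous_const.max (continuous_id.add continuous_const)).prodMk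
      continuous_const
  simpa using hCc.mem_of_tendsto ((hcont.tendsto ⊥).comp hlim)
    (Eventually.of_forall (hC.sup_tsmul_mul_mem hl.le hj h))

lemma vee_mem (hC : IsMonotonePrecongruence C) (hCc : IsClosed C)
    {f : (Fin n → Trop) × (Fin n → Trop)} (hf : f ∈ C) : vee f ∈ C := by
  set j : Fin n → Trop := fun i => if f.1 i < f.2 i then f.1 i else ⊥
  have hsplit : f.1 ≤ (vee f).1 ⊔ j := by
    intro i
    rcases le_or_gt (f.2 i) (f.1 i) with h | h
    · simp [h]
    · simp [j, h, not_le.2 h]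
  have h : ((vee f).1 ⊔ j, (vee f).2) ∈ C :=
    hC.mem_of_le_left (hC.mem_of_le_right hf (vee_snd_le f)) hsplit
  obtain ⟨l, hl, hj⟩ := exists_neg_le_tsmul (a := j) (b := (vee f).2) fun i => by
    by_cases h : f.1 i < f.2 i <;> simp [j, h]
  exact hC.mem_of_sup_mem hCc hl hj h

lemma oplusI_mem (hC : IsMonotonePrecongruence C) {x y : (Fin n → Trop) × (Fin n → Trop)}
    (hx : x ∈ C) (hy : y ∈ C) {i : Fin n} (hxy : x.2 i = y.1 i) : oplusI i x y ∈ C := by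
  set y' := update y.1 i ⊥
  have hle : y.1 ≤ x.2 ⊔ y' := by
    intro k
    rcases eq_or_ne k i with rfl | hk
    · exact hxy.ge.trans le_sup_left
    · exact (update_of_ne hk _ _).ge.trans le_sup_right
  have h₁ : (x.1 ⊔ y', y.1) ∈ C :=
    hC.trans_mem _ (hC.add_mem _ hx (y', y') (hC.monotone_mem _ le_rfl)) _
      (hC.monotone_mem (_, y.1) hle) rfl
  have h₂ : (x.1 ⊔ y', y.2) ∈ C := hC.trans_mem _ h₁ _ hy rfl
  have h₃ : (x.1, update x.2 i ⊥) ∈ C :=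
    hC.mem_of_le_right hx (update_le_self_iff.2 bot_le)
  have := hC.add_mem _ h₂ _ h₃
  rwa [sup_right_comm, sup_idem, sup_comm y.2] at this

lemma isSignedBendCone_signedPart (hC : IsMonotonePrecongruence C) (hCc : IsClosed C) :
    IsSignedBendCone (signedPart C) where
  signed _ hx := hx.2
  pos_mem _ := ⟨hC.monotone_mem _ fun _ => bot_le, fun _ => Or.inr rfl⟩
  smul_mem x hx l := ⟨hC.smul_mem x hx.1 l, hx.2.tsmul l⟩
  add_vee_mem x hx y hy := ⟨hC.vee_mem hCc (hC.add_mem x hx.1 y hy.1), vee_signed _⟩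
  addI_vee_mem _ hx _ hy _ hxy := ⟨hC.vee_mem hCc (hC.oplusI_mem hx.1 hy.1 hxy), vee_signed _⟩

end IsMonotonePrecongruence

lemma IsClosed.signedPart {C : Set ((Fin n → Trop) × (Fin n → Trop))} (hC : IsClosed C) :
    IsClosed (signedPart C) :=
  hC.inter isClosed_setOf_signedVecPair

namespace IsSignedBendCone

variable {R : Set ((Fin n → Trop) × (Fin n → Trop))}

lemma update_snd_bot_mem (hR : IsSignedBendCone R) {x : (Fin n → Trop) × (Fin n → Trop)}
    (hx : x ∈ R) (k : Fin n) : (x.1, update x.2 k ⊥) ∈ R := by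
  have h := hR.addI_vee_mem x hx _ (hR.pos_mem (update ⊥ k (x.2 k))) k (by simp)
  have heq : oplusI k x (update ⊥ k (x.2 k), fun _ => ⊥) = (x.1, update x.2 k ⊥) := by
    ext i <;> rcases eq_or_ne i k with rfl | hi <;> simp [oplusI, *]
  rwa [heq, vee_eq_self ((hR.signed x hx).of_snd_le (update_le_self_iff.2 bot_le))] at h

lemma update_snd_mem (hR : IsSignedBendCone R) {x : (Fin n → Trop) × (Fin n → Trop)}
    (hx : x ∈ R) {k : Fin n} {c : Trop} (hc : c ≤ x.2 k) : (x.1, update x.2 k c) ∈ R := by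
  obtain ⟨l, hl, rfl⟩ := exists_nonpos_add_eq hc
  have h := hR.add_vee_mem _ (hR.update_snd_bot_mem hx k) _ (hR.smul_mem x hx l)
  have heq : (x.1 ⊔ tsmul l x.1, update x.2 k ⊥ ⊔ tsmul l x.2) =
      (x.1, update x.2 k (l + x.2 k)) := by
    ext i
    · exact sup_eq_left.2 (tsmul_le_self hl x.1 i)
    · rcases eq_or_ne i k with rfl | hi
      · simp [tsmul]
      · simpa [hi, tsmul] using add_le_of_nonpos_left hl
  rwa [heq, vee_eq_self ((hR.signed x hx).of_snd_le
    (update_le_self_iff.2 (add_le_of_nonpos_left hl)))] at h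

lemma snd_mem_of_le (hR : IsSignedBendCone R) {x : (Fin n → Trop) × (Fin n → Trop)}
    (hx : x ∈ R) {c : Fin n → Trop} (hc : c ≤ x.2) : (x.1, c) ∈ R :=
  mem_of_update_mem (S := {v | (x.1, v) ∈ R}) hx fun _ hv k hvk =>
    hR.update_snd_mem hv ((hc k).trans hvk.ge)

lemma mem_of_le (hR : IsSignedBendCone R) {x y : (Fin n → Trop) × (Fin n → Trop)} (hx : x ∈ R)
    (hy : SignedVecPair y) (h₁ : x.1 ≤ y.1) (h₂ : y.2 ≤ x.2) : y ∈ R := by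
  have h := hR.add_vee_mem _ (hR.snd_mem_of_le hx h₂) _ (hR.pos_mem y.1)
  rwa [sup_eq_right.2 h₁, show (y.2 ⊔ fun _ => ⊥) = y.2 from sup_bot_eq y.2,
    vee_eq_self hy] at h

lemma vee_mem_of_vee_mem (hR : IsSignedBendCone R) {f g : (Fin n → Trop) × (Fin n → Trop)}
    (hf : vee f ∈ R) (h₂ : g.2 ≤ f.2) (h₁ : ∀ k, f.1 k ≤ g.1 k ∨ f.1 k < g.2 k) : vee g ∈ R :=
  hR.mem_of_le hf (vee_signed g) (vee_le_vee h₂ h₁).1 (vee_le_vee h₂ h₁).2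

lemma vee_sup_mem (hR : IsSignedBendCone R) {f g : (Fin n → Trop) × (Fin n → Trop)}
    (hf : vee f ∈ R) (hg : vee g ∈ R) : vee (f ⊔ g) ∈ R :=
  vee_sup_vee f g ▸ hR.add_vee_mem _ hf _ hg

/-- The bend `(x ⊕ₖ z)^∨` with `x = f^∨` and `z = a^∨`, followed by adding `x` back. -/
lemma vee_sup_erase_mem (hR : IsSignedBendCone R) {f a : (Fin n → Trop) × (Fin n → Trop)}
    (hf : vee f ∈ R) (ha : vee a ∈ R) {k : Fin n} (hk : a.2 k ≤ a.1 k)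
    (hfa : (vee f).2 k = a.1 k) : vee (f ⊔ (update a.1 k ⊥, update a.2 k ⊥)) ∈ R := by
  set x := vee f
  set z := vee a
  have hz₂ : update z.2 k ⊥ = z.2 := update_eq_self_iff.2 (by simp [z, not_lt.2 hk])
  have hbend := hR.addI_vee_mem x hf z ha k (by simp [z, hk, hfa])
  have hx : vee x = x := vee_eq_self (vee_signed f)
  convert hR.add_vee_mem x hf _ hbend using 1
  calc vee (f ⊔ (update a.1 k ⊥, update a.2 k ⊥))
      = vee (x ⊔ (update z.1 k ⊥, update z.2 k ⊥)) := by rw [← vee_sup_vee, vee_erase]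
    _ = vee (x ⊔ oplusI k x z) := by
        rw [hz₂]
        congr 1
        ext i <;> rcases eq_or_ne i k with rfl | hi <;> simp [oplusI, *]
    _ = vee (x ⊔ vee (oplusI k x z)) := by rw [← vee_sup_vee, hx]

lemma vee_trans_mem (hR : IsSignedBendCone R) {p m q : Fin n → Trop} (hpm : vee (p, m) ∈ R)
    (hmq : vee (m, q) ∈ R) : vee (p, q) ∈ R := by
  set b : Fin n → Trop := fun k => if p k < m k ∧ q k ≤ m k then ⊥ else m k
  have hb : vee (p ⊔ b, m ⊔ q) ∈ R := by
    refine mem_of_update_mem (S := {v | vee (p ⊔ v, m ⊔ q) ∈ R}) (hR.vee_sup_mem hpm hmq) ?_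
    intro v hv k hvk
    by_cases hk : p k < m k ∧ q k ≤ m k
    · have h := hR.vee_sup_erase_mem hpm hv (k := k) (by simp [hvk, hk.2])
        (by simp [hk.1, hvk, hk.1.le])
      show vee (p ⊔ update v k (b k), m ⊔ q) ∈ R
      convert h using 2
      ext i <;> rcases eq_or_ne i k with rfl | hi <;> simp [b, *]
    · rwa [show b k = v k from (if_neg hk).trans hvk.symm, update_eq_self]
  refine hR.vee_mem_of_vee_mem hb le_sup_right fun k => ?_
  by_cases hk : p k < m k ∧ q k ≤ m k
  · simp [b, hk]
  · simp only [b, Pi.sup_apply, if_neg hk]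
    rcases le_or_gt (m k) (p k) with h | h
    · exact .inl (sup_le le_rfl h)
    · have hmq : m k < q k := not_le.1 fun h' => hk ⟨h, h'⟩
      exact .inr (sup_lt_iff.2 ⟨h.trans hmq, hmq⟩)

lemma isClosed_vee_preimage (hR : IsSignedBendCone R) (hRc : IsClosed R) :
    IsClosed (vee ⁻¹' R) := by
  let piece (s : Finset (Fin n)) : Set ((Fin n → Trop) × (Fin n → Trop)) :=
    {f | (∀ i ∈ s, f.2 i ≤ f.1 i) ∧ ∀ i ∉ s, f.1 i ≤ f.2 i} ∩ signRestrict s ⁻¹' R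
  have hpiece : vee ⁻¹' R = ⋃ s, piece s := by
    ext f
    simp only [Set.mem_preimage, Set.mem_iUnion]
    constructor
    · intro hf
      refine ⟨Finset.univ.filter fun i => f.2 i ≤ f.1 i, ⟨?_, ?_⟩, ?_⟩
      · simp
      · simpa using fun i h => h.le
      · rwa [Set.mem_preimage, signRestrict_filter_eq_vee]
    · rintro ⟨s, ⟨hs, hsc⟩, hf⟩
      refine hR.mem_of_le hf (vee_signed f) (fun i => ?_) (fun i => ?_)
      · by_cases hi : i ∈ s <;> simp [signRestrict, hi, hs i]
      · by_cases hi : i ∈ s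
        · simp [signRestrict, hi, not_lt.2 (hs i hi)]
        · simpa [signRestrict, hi] using vee_snd_le f i
  rw [hpiece]
  refine isClosed_iUnion_of_finite fun s => .inter ?_ (hRc.preimage (continuous_signRestrict s))
  simp only [Set.ofPred_and, Set.ofPred_forall]
  refine .inter (isClosed_iInter fun i => isClosed_iInter fun _ => ?_)
    (isClosed_iInter fun i => isClosed_iInter fun _ => ?_) <;>
  exact isClosed_le (by fun_prop) (by fun_prop)

lemma isMonotonePrecongruence_vee_preimage (hR : IsSignedBendCone R) :
    IsMonotonePrecongruence (vee ⁻¹' R) where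
  smul_mem f hf l := by
    simpa only [Set.mem_preimage, vee_tsmul] using hR.smul_mem _ hf l
  add_mem _ hf _ hg := hR.vee_sup_mem hf hg
  trans_mem f hf g hg hfg := hR.vee_trans_mem hf (hfg ▸ hg)
  monotone_mem f hf := by
    rw [Set.mem_preimage, vee_of_le hf]
    exact hR.pos_mem f.1

lemma signedPart_vee_preimage (hR : IsSignedBendCone R) : signedPart (vee ⁻¹' R) = R := by
  ext x
  constructor
  · rintro ⟨hx, hs⟩
    rwa [Set.mem_preimage, vee_eq_self hs] at hx
  · intro hx
    exact ⟨by rwa [Set.mem_preimage, vee_eq_self (hR.signed x hx)], hR.signed x hx⟩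

end IsSignedBendCone

end Pairs

/-- R is a closed signed bend cone iff R is the signed part of some closed
monotone pre-congruence. -/
theorem closed_signedBendCone_iff_signedPart {n : ℕ}
    (R : Set ((Fin n → Trop) × (Fin n → Trop))) :
    (IsSignedBendCone R ∧ IsClosed R) ↔
      ∃ C : Set ((Fin n → Trop) × (Fin n → Trop)),
        IsMonotonePrecongruence C ∧ IsClosed C ∧ R = signedPart C := by
  constructor
  · rintro ⟨hR, hRc⟩
    exact ⟨vee ⁻¹' R, hR.isMonotonePrecongruence_vee_preimage, hR.isClosed_vee_preimage hRc,
      hR.signedPart_vee_preimage.symm⟩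
  · rintro ⟨C, hC, hCc, rfl⟩
    exact ⟨hC.isSignedBendCone_signedPart hCc, hCc.signedPart⟩
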